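/- arXiv:1712.02732 — 2 statements merged into one kernel-verified Lean document; each statement's English description precedes it below -/
import Mathlib

section
/- The coherence monotone C_0 equals the minimal conditional 0-entropy over purifications and measurements: for every d×d density matrix ρ, C_0(ρ) equals the infimum, over all d_E ≥ 1, all purifications ψ : Fin d × Fin d_E → ℂ of ρ, and all orthonormal bases {e_j} of ℂ^{d_E}, of log₂ max_j #{i | c_{ij} ≠ 0}, where c_{ij} = Σ_k ψ(i,k)·conj(e_j(k)). -/
open Matrix Kronecker
open scoped ComplexOrder Classical

/-- Positive semidefinite square root of a matrix (zero if not PSD). -/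
noncomputable def matSqrt {n : Type*} [Fintype n] [DecidableEq n] (A : Matrix n n ℂ) :
    Matrix n n ℂ :=
  if h : A.PosSemidef then
    h.1.eigenvectorUnitary.1 * diagonal ((↑) ∘ (√·) ∘ h.1.eigenvalues) *
      (star h.1.eigenvectorUnitary : Matrix n n ℂ)
  else 0

/-- Fidelity `F(ρ,σ) = (Tr √(√ρ σ √ρ))²`. -/
noncomputable def fidelity {n : Type*} [Fintype n] [DecidableEq n] (ρ σ : Matrix n n ℂ) : ℝ :=
  ((matSqrt (matSqrt ρ * σ * matSqrt ρ)).trace).re ^ 2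

/-- A density matrix: positive semidefinite with trace 1. -/
def IsDensityMatrix {n : Type*} [Fintype n] [DecidableEq n] (ρ : Matrix n n ℂ) : Prop :=
  ρ.PosSemidef ∧ ρ.trace = 1

/-- Incoherent (diagonal) matrix in the computational basis. -/
def IsIncoherent {n : Type*} [Fintype n] [DecidableEq n] (δ : Matrix n n ℂ) : Prop :=
  ∀ i j, i ≠ j → δ i j = 0

/-- Min-relative entropy `D_min(ρ‖σ) = -log₂ F(ρ,σ)`. -/
noncomputable def Dmin {n : Type*} [Fintype n] [DecidableEq n] (ρ σ : Matrix n n ℂ) : ℝ :=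
  - Real.logb 2 (fidelity ρ σ)

/-- Max-relative entropy `D_max(ρ‖σ) = log₂ inf {λ | λσ - ρ ⪰ 0}`. -/
noncomputable def Dmax {n : Type*} [Fintype n] [DecidableEq n] (ρ σ : Matrix n n ℂ) : ℝ :=
  Real.logb 2 (sInf {l : ℝ | (l • σ - ρ).PosSemidef})

/-- Min-entropy of coherence: infimum of `D_min(ρ‖δ)` over incoherent density matrices `δ`. -/
noncomputable def Cmin {n : Type*} [Fintype n] [DecidableEq n] (ρ : Matrix n n ℂ) : ℝ :=
  sInf {x | ∃ δ, IsDensityMatrix δ ∧ IsIncoherent δ ∧ x = Dmin ρ δ}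

/-- Max-entropy of coherence: infimum of `D_max(ρ‖δ)` over incoherent density matrices `δ`. -/
noncomputable def Cmax {n : Type*} [Fintype n] [DecidableEq n] (ρ : Matrix n n ℂ) : ℝ :=
  sInf {x | ∃ δ, IsDensityMatrix δ ∧ IsIncoherent δ ∧ x = Dmax ρ δ}

/-- Geometric coherence: infimum of `1 - F(ρ,δ)` over incoherent density matrices `δ`. -/
noncomputable def Cg {n : Type*} [Fintype n] [DecidableEq n] (ρ : Matrix n n ℂ) : ℝ :=
  sInf {x | ∃ δ, IsDensityMatrix δ ∧ IsIncoherent δ ∧ x = 1 - fidelity ρ δ}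

/-- `Tr[ρ log₂ ρ] = Σ λᵢ log₂ λᵢ` over the eigenvalues of a Hermitian `ρ`
(with `0·log₂ 0 = 0`, since `Real.logb 2 0 = 0`). -/
noncomputable def trLog2Self {n : Type*} [Fintype n] [DecidableEq n] (ρ : Matrix n n ℂ) : ℝ :=
  if h : ρ.IsHermitian then ∑ i, h.eigenvalues i * Real.logb 2 (h.eigenvalues i) else 0

/-- Von Neumann entropy `S(ρ) = -Σ λᵢ log₂ λᵢ`. -/
noncomputable def vN {n : Type*} [Fintype n] [DecidableEq n] (ρ : Matrix n n ℂ) : ℝ :=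
  - trLog2Self ρ

/-- `log₂ σ` via the spectral functional calculus. -/
noncomputable def matLog2 {n : Type*} [Fintype n] [DecidableEq n] (σ : Matrix n n ℂ) :
    Matrix n n ℂ :=
  if h : σ.IsHermitian then
    (h.eigenvectorUnitary : Matrix n n ℂ) *
      Matrix.diagonal (fun i => (Real.logb 2 (h.eigenvalues i) : ℂ)) *
      (h.eigenvectorUnitary : Matrix n n ℂ)ᴴ
  else 0

/-- Base-2 Shannon entropy of the distribution `i ↦ |ψ(i)|²`,
which equals `S(Δ(|ψ⟩⟨ψ|))` for a unit vector `ψ`. -/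
noncomputable def shannonOfVec {n : Type*} [Fintype n] (ψ : n → ℂ) : ℝ :=
  - ∑ i, ‖ψ i‖ ^ 2 * Real.logb 2 (‖ψ i‖ ^ 2)

/-- Coherence of formation: infimum of the average dephased pure-state entropy
over all finite pure-state ensembles for `ρ`. -/
noncomputable def Cf {d : ℕ} (ρ : Matrix (Fin d) (Fin d) ℂ) : ℝ :=
  sInf {x | ∃ m : ℕ, ∃ p : Fin m → ℝ, ∃ ψ : Fin m → Fin d → ℂ,
    (∀ j, 0 ≤ p j) ∧ (∑ j, p j) = 1 ∧ (∀ j, (∑ i, ‖ψ j i‖ ^ 2) = 1) ∧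
    (∑ j, (p j : ℂ) • Matrix.vecMulVec (ψ j) (fun i => starRingEnd ℂ (ψ j i))) = ρ ∧
    x = ∑ j, p j * shannonOfVec (ψ j)}

/-- The coherence monotone `C₀`: infimum over pure-state ensembles of
`max_j log₂ T_j`, where `T_j` is the number of nonzero coordinates of `ψ_j`. -/
noncomputable def C0 {d : ℕ} (ρ : Matrix (Fin d) (Fin d) ℂ) : ℝ :=
  sInf {x | ∃ m : ℕ, ∃ p : Fin m → ℝ, ∃ ψ : Fin m → Fin d → ℂ,
    (∀ j, 0 < p j) ∧ (∑ j, p j) = 1 ∧ (∀ j, (∑ i, ‖ψ j i‖ ^ 2) = 1) ∧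
    (∑ j, (p j : ℂ) • Matrix.vecMulVec (ψ j) (fun i => starRingEnd ℂ (ψ j i))) = ρ ∧
    x = ⨆ j, Real.logb 2 ((Finset.univ.filter fun i => ψ j i ≠ 0).card)}

/-- `ψ : ℂ^{d_A} ⊗ ℂ^{d_E}` is a purification of `ρ`. -/
def IsPurification {dA dE : ℕ} (ρ : Matrix (Fin dA) (Fin dA) ℂ)
    (ψ : Fin dA × Fin dE → ℂ) : Prop :=
  (∑ x, ‖ψ x‖ ^ 2) = 1 ∧ ∀ i j, (∑ k, ψ (i, k) * starRingEnd ℂ (ψ (j, k))) = ρ i j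

/-- The state `ρ_{X_A E}` obtained from `|ψ⟩⟨ψ|` by dephasing system `A`. -/
noncomputable def dephasedPur {dA dE : ℕ} (ψ : Fin dA × Fin dE → ℂ) :
    Matrix (Fin dA × Fin dE) (Fin dA × Fin dE) ℂ :=
  fun x y => if x.1 = y.1 then ψ x * starRingEnd ℂ (ψ y) else 0

/-- Conditional min-entropy
`H_min(A|E) = -log₂ inf {Tr σ | σ ⪰ 0, I_A ⊗ σ - ρ_{AE} ⪰ 0}`. -/
noncomputable def HminCond {dA dE : ℕ}
    (ρAE : Matrix (Fin dA × Fin dE) (Fin dA × Fin dE) ℂ) : ℝ :=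
  - Real.logb 2 (sInf {x | ∃ σ : Matrix (Fin dE) (Fin dE) ℂ, σ.PosSemidef ∧
      ((1 : Matrix (Fin dA) (Fin dA) ℂ) ⊗ₖ σ - ρAE).PosSemidef ∧ x = σ.trace.re})

/-- Conditional max-entropy
`H_max(A|E) = log₂ sup {F(I_A ⊗ σ, ρ_{AE}) | σ a density matrix}`. -/
noncomputable def HmaxCond {dA dE : ℕ}
    (ρAE : Matrix (Fin dA × Fin dE) (Fin dA × Fin dE) ℂ) : ℝ :=
  Real.logb 2 (sSup {x | ∃ σ : Matrix (Fin dE) (Fin dE) ℂ, IsDensityMatrix σ ∧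
      x = fidelity ((1 : Matrix (Fin dA) (Fin dA) ℂ) ⊗ₖ σ) ρAE})

/-!
Both sides are infima of `log₂` of the largest column support over factorizations `ρ = C Cᴴ`.
An ensemble `{p_j, ψ_j}` gives the columns `√p_j ψ_j`, read as a purification measured in the
standard basis. Conversely, a purification `Ψ` and an orthonormal basis, the rows of a unitary
`E`, give `C = Ψ Eᴴ` with `C Cᴴ = Ψ Ψᴴ = ρ`; normalising the nonzero columns of `C` gives back an
ensemble with the same supports.
-/

open Finset

-- Monotone on all of `ℕ` thanks to the junk value `logb 2 0 = 0 = logb 2 1`.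
lemma monotone_logb_two_natCast : Monotone fun n : ℕ => Real.logb 2 n := by
  intro a b hab
  rcases Nat.eq_zero_or_pos a with rfl | ha
  · rcases Nat.eq_zero_or_pos b with rfl | hb
    · simp
    · simpa using Real.logb_nonneg one_lt_two (Nat.one_le_cast.mpr hb)
  · exact Real.logb_le_logb_of_le one_lt_two (by exact_mod_cast ha) (by exact_mod_cast hab)

lemma iSup_logb_two_natCast {ι : Type*} [Fintype ι] (f : ι → ℕ) :
    ⨆ j, Real.logb 2 (f j) = Real.logb 2 ((univ.sup f : ℕ) : ℝ) := by
  cases isEmpty_or_nonempty ι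
  · simp
  obtain ⟨j₀, -, hj₀⟩ := exists_mem_eq_sup univ univ_nonempty f
  refine le_antisymm (ciSup_le fun j => monotone_logb_two_natCast (le_sup (mem_univ j))) ?_
  rw [hj₀]
  exact le_ciSup (Set.finite_range fun j => Real.logb 2 (f j)).bddAbove j₀

section Matrix

variable {n κ : Type*} [Fintype κ]

noncomputable def maxColSupport [Fintype n] {R : Type*} [Zero R] (C : Matrix n κ R) : ℕ :=
  univ.sup fun j => #{i | C i j ≠ 0}

def nonzeroCols {R : Type*} [Zero R] (C : Matrix n κ R) : Matrix n {j // ∃ i, C i j ≠ 0} R :=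
  C.submatrix id Subtype.val

lemma nonzeroCols_mul_conjTranspose [Fintype n] {R : Type*} [Semiring R] [StarRing R]
    (C : Matrix n κ R) :
    nonzeroCols C * (nonzeroCols C)ᴴ = C * Cᴴ := by
  ext i i'
  simp only [nonzeroCols, mul_apply, conjTranspose_apply, submatrix_apply, id]
  rw [← sum_subtype (univ.filter fun j => ∃ i, C i j ≠ 0) (by simp)
    (fun j => C i j * star (C i' j))]
  refine sum_filter_of_ne fun j _ hj => ?_
  by_contra! h
  exact hj (by rw [h i, zero_mul])

lemma maxColSupport_nonzeroCols [Fintype n] {R : Type*} [Zero R] (C : Matrix n κ R) :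
    maxColSupport (nonzeroCols C) = maxColSupport C := by
  refine le_antisymm
    (Finset.sup_le fun j _ => le_sup (f := fun j => #{i | C i j ≠ 0}) (mem_univ j.1))
    (Finset.sup_le fun j _ => ?_)
  by_cases hj : ∃ i, C i j ≠ 0
  · exact le_sup (f := fun j => #{i | nonzeroCols C i j ≠ 0}) (mem_univ ⟨j, hj⟩)
  · simp only [not_exists, not_not] at hj
    simp [hj]

lemma mul_conjTranspose_self_apply_self (A : Matrix n κ ℂ) (i : n) :
    (A * Aᴴ) i i = ((∑ j, ‖A i j‖ ^ 2 : ℝ) : ℂ) := by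
  simp [mul_apply, Complex.mul_conj, Complex.normSq_eq_norm_sq]

lemma sum_norm_sq_eq_of_mul_conjTranspose_eq [Fintype n] {κ' : Type*} [Fintype κ']
    {A : Matrix n κ ℂ} {B : Matrix n κ' ℂ} (h : A * Aᴴ = B * Bᴴ) :
    ∑ i, ∑ j, ‖A i j‖ ^ 2 = ∑ i, ∑ j, ‖B i j‖ ^ 2 := by
  refine sum_congr rfl fun i _ => ?_
  exact_mod_cast (mul_conjTranspose_self_apply_self A i).symm.trans
    ((congrFun (congrFun h i) i).trans (mul_conjTranspose_self_apply_self B i))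

lemma mul_conjTranspose_mul_self_of_mem_unitaryGroup {R : Type*} [CommRing R] [StarRing R]
    [DecidableEq κ] (A : Matrix n κ R) {U : Matrix κ κ R} (hU : U ∈ unitaryGroup κ R) :
    A * Uᴴ * (A * Uᴴ)ᴴ = A * Aᴴ := by
  rw [conjTranspose_mul, conjTranspose_conjTranspose, Matrix.mul_assoc, ← Matrix.mul_assoc Uᴴ,
    ← star_eq_conjTranspose, Unitary.star_mul_self_of_mem hU, Matrix.one_mul]

lemma of_mem_unitaryGroup_iff [DecidableEq κ] (e : κ → κ → ℂ) :
    of e ∈ unitaryGroup κ ℂ ↔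
      ∀ j j', ∑ k, e j k * starRingEnd ℂ (e j' k) = if j = j' then 1 else 0 := by
  simp [mem_unitaryGroup_iff, ← Matrix.ext_iff, mul_apply, one_apply]

end Matrix

section Ensemble

variable {n ι : Type*}

noncomputable def ensembleMatrix (p : ι → ℝ) (ψ : ι → n → ℂ) : Matrix n ι ℂ :=
  of fun i j => (√(p j) : ℂ) * ψ j i

lemma ensembleMatrix_ne_zero_iff {p : ι → ℝ} {j : ι} (hp : 0 < p j) (ψ : ι → n → ℂ) (i : n) :
    ensembleMatrix p ψ i j ≠ 0 ↔ ψ j i ≠ 0 := by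
  simp [ensembleMatrix, Real.sqrt_ne_zero'.mpr hp]

lemma ensembleMatrix_mul_conjTranspose [Fintype ι] {p : ι → ℝ} (hp : ∀ j, 0 ≤ p j)
    (ψ : ι → n → ℂ) :
    ensembleMatrix p ψ * (ensembleMatrix p ψ)ᴴ =
      ∑ j, (p j : ℂ) • vecMulVec (ψ j) (fun i => starRingEnd ℂ (ψ j i)) := by
  ext i i'
  simp only [ensembleMatrix, mul_apply, conjTranspose_apply, of_apply, Matrix.sum_apply,
    Matrix.smul_apply, vecMulVec_apply, smul_eq_mul]
  refine sum_congr rfl fun j _ => ?_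
  have hsq : (√(p j) : ℂ) * (√(p j) : ℂ) = p j := by exact_mod_cast Real.mul_self_sqrt (hp j)
  rw [star_mul', ← hsq, Complex.star_def, Complex.conj_ofReal]
  ring

lemma sum_norm_sq_ensembleMatrix [Fintype n] {p : ι → ℝ} (hp : ∀ j, 0 ≤ p j)
    (ψ : ι → n → ℂ) (j : ι) :
    ∑ i, ‖ensembleMatrix p ψ i j‖ ^ 2 = p j * ∑ i, ‖ψ j i‖ ^ 2 := by
  simp [ensembleMatrix, mul_sum, mul_pow, Real.sq_sqrt (hp j)]

variable [Fintype n] [Fintype ι]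

def IsPureEnsemble (ρ : Matrix n n ℂ) (p : ι → ℝ) (ψ : ι → n → ℂ) : Prop :=
  (∀ j, 0 < p j) ∧ ∑ j, p j = 1 ∧ (∀ j, ∑ i, ‖ψ j i‖ ^ 2 = 1) ∧
    ∑ j, (p j : ℂ) • vecMulVec (ψ j) (fun i => starRingEnd ℂ (ψ j i)) = ρ

variable {ρ : Matrix n n ℂ} {p : ι → ℝ} {ψ : ι → n → ℂ}

namespace IsPureEnsemble

lemma nonempty (h : IsPureEnsemble ρ p ψ) : Nonempty ι := by
  by_contra hι
  rw [not_nonempty_iff] at hι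
  simpa using h.2.1

lemma comp_equiv {ι' : Type*} [Fintype ι'] (h : IsPureEnsemble ρ p ψ) (e : ι' ≃ ι) :
    IsPureEnsemble ρ (p ∘ e) (ψ ∘ e) :=
  ⟨fun j => h.1 (e j), (e.sum_comp p).trans h.2.1, fun j => h.2.2.1 (e j),
    (e.sum_comp fun j => (p j : ℂ) • vecMulVec (ψ j) (fun i => starRingEnd ℂ (ψ j i))).trans
      h.2.2.2⟩

lemma ensembleMatrix_mul_conjTranspose_eq (h : IsPureEnsemble ρ p ψ) :
    ensembleMatrix p ψ * (ensembleMatrix p ψ)ᴴ = ρ :=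
  (ensembleMatrix_mul_conjTranspose (fun j => (h.1 j).le) ψ).trans h.2.2.2

lemma sum_norm_sq_ensembleMatrix_eq_one (h : IsPureEnsemble ρ p ψ) :
    ∑ i, ∑ j, ‖ensembleMatrix p ψ i j‖ ^ 2 = 1 := by
  rw [sum_comm]
  simp only [sum_norm_sq_ensembleMatrix (fun j => (h.1 j).le), h.2.2.1, mul_one, h.2.1]

lemma maxColSupport_ensembleMatrix (h : IsPureEnsemble ρ p ψ) :
    maxColSupport (ensembleMatrix p ψ) = univ.sup fun j => #{i | ψ j i ≠ 0} := by
  simp only [maxColSupport, ensembleMatrix_ne_zero_iff (h.1 _)]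

end IsPureEnsemble

lemma exists_isPureEnsemble_ensembleMatrix_eq {C : Matrix n ι ℂ} (hcol : ∀ j, ∃ i, C i j ≠ 0)
    (hC : C * Cᴴ = ρ) (hnorm : ∑ i, ∑ j, ‖C i j‖ ^ 2 = 1) :
    ∃ p ψ, IsPureEnsemble ρ p ψ ∧ ensembleMatrix p ψ = C := by
  set p : ι → ℝ := fun j => ∑ i, ‖C i j‖ ^ 2
  have hp : ∀ j, 0 < p j := fun j =>
    let ⟨i, hi⟩ := hcol j
    sum_pos' (fun _ _ => by positivity) ⟨i, mem_univ i, by positivity⟩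
  set ψ : ι → n → ℂ := fun j i => ((√(p j))⁻¹ : ℂ) * C i j
  have hCeq : ensembleMatrix p ψ = C := by
    ext i j
    have : (√(p j) : ℂ) ≠ 0 := by exact_mod_cast (Real.sqrt_pos.mpr (hp j)).ne'
    simp [ensembleMatrix, ψ, this]
  refine ⟨p, ψ, ⟨hp, ?_, fun j => ?_, ?_⟩, hCeq⟩
  · rwa [sum_comm] at hnorm
  · have h := sum_norm_sq_ensembleMatrix (fun j => (hp j).le) ψ j
    rw [hCeq] at h
    exact (mul_eq_left₀ (hp j).ne').mp h.symm
  · rw [← ensembleMatrix_mul_conjTranspose (fun j => (hp j).le), hCeq, hC]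

lemma exists_isPureEnsemble_of_mul_conjTranspose {κ : Type*} [Fintype κ] {C : Matrix n κ ℂ}
    (hC : C * Cᴴ = ρ) (hnorm : ∑ i, ∑ j, ‖C i j‖ ^ 2 = 1) :
    ∃ (m : ℕ) (p : Fin m → ℝ) (ψ : Fin m → n → ℂ), IsPureEnsemble ρ p ψ ∧
      ⨆ j, Real.logb 2 #{i | ψ j i ≠ 0} = Real.logb 2 (maxColSupport C) := by
  obtain ⟨p, ψ, hens, hCeq⟩ := exists_isPureEnsemble_ensembleMatrix_eq (C := nonzeroCols C)
    (fun j => j.2) ((nonzeroCols_mul_conjTranspose C).trans hC)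
    ((sum_norm_sq_eq_of_mul_conjTranspose_eq (nonzeroCols_mul_conjTranspose C)).trans hnorm)
  let e := (Fintype.equivFin {j // ∃ i, C i j ≠ 0}).symm
  refine ⟨_, _, _, hens.comp_equiv e,
    (e.iSup_comp (g := fun j => Real.logb 2 #{i | ψ j i ≠ 0})).trans ?_⟩
  rw [iSup_logb_two_natCast, ← maxColSupport_nonzeroCols, ← hCeq,
    hens.maxColSupport_ensembleMatrix]

end Ensemble

lemma C0_eq_sInf {d : ℕ} (ρ : Matrix (Fin d) (Fin d) ℂ) :
    C0 ρ = sInf {x | ∃ (m : ℕ) (p : Fin m → ℝ) (ψ : Fin m → Fin d → ℂ),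
      IsPureEnsemble ρ p ψ ∧ x = ⨆ j, Real.logb 2 #{i | ψ j i ≠ 0}} := by
  simp only [C0, IsPureEnsemble, and_assoc]

lemma isPurification_iff {dA dE : ℕ} (ρ : Matrix (Fin dA) (Fin dA) ℂ)
    (ψ : Fin dA × Fin dE → ℂ) :
    IsPurification ρ ψ ↔ ∑ i, ∑ k, ‖ψ (i, k)‖ ^ 2 = 1 ∧
      of (Function.curry ψ) * (of (Function.curry ψ))ᴴ = ρ := by
  simp [IsPurification, Fintype.sum_prod_type, ← Matrix.ext_iff, mul_apply]

theorem stmt18_general {d : ℕ} (ρ : Matrix (Fin d) (Fin d) ℂ) :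
    C0 ρ = sInf {x | ∃ dE : ℕ, 1 ≤ dE ∧ ∃ ψ : Fin d × Fin dE → ℂ, IsPurification ρ ψ ∧
      ∃ e : Fin dE → Fin dE → ℂ,
        (∀ j j', (∑ k, e j k * starRingEnd ℂ (e j' k)) = if j = j' then 1 else 0) ∧
        x = Real.logb 2 ((Finset.univ.sup fun j : Fin dE =>
          (Finset.univ.filter fun i : Fin d =>
            (∑ k, ψ (i, k) * starRingEnd ℂ (e j k)) ≠ 0).card : ℕ) : ℝ)} := by
  rw [C0_eq_sInf]
  congr 1
  ext x
  constructor
  · rintro ⟨m, p, ψ, hens, rfl⟩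
    refine ⟨m, Fin.pos_iff_nonempty.mpr hens.nonempty, fun x => ensembleMatrix p ψ x.1 x.2,
      (isPurification_iff ρ _).mpr ⟨hens.sum_norm_sq_ensembleMatrix_eq_one,
        hens.ensembleMatrix_mul_conjTranspose_eq⟩,
      (1 : Matrix (Fin m) (Fin m) ℂ), (of_mem_unitaryGroup_iff _).mp (one_mem _), ?_⟩
    rw [iSup_logb_two_natCast, ← hens.maxColSupport_ensembleMatrix]
    simp [maxColSupport, one_apply]
  · rintro ⟨dE, -, ψ, hψ, e, he, rfl⟩
    rw [isPurification_iff] at hψ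
    rw [← of_mem_unitaryGroup_iff] at he
    obtain ⟨m, p, φ, hens, hval⟩ := exists_isPureEnsemble_of_mul_conjTranspose
      ((mul_conjTranspose_mul_self_of_mem_unitaryGroup _ he).trans hψ.2)
      ((sum_norm_sq_eq_of_mul_conjTranspose_eq
        (mul_conjTranspose_mul_self_of_mem_unitaryGroup _ he)).trans hψ.1)
    -- the coefficients `c_{ij}` are the entries of `Ψ Eᴴ`
    exact ⟨m, p, φ, hens, hval.symm⟩

/-- `C₀(ρ)` equals the minimal conditional 0-entropy
`log₂ max_j #{i | c_{ij} ≠ 0}` over all purifications and all orthonormal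
measurement bases on the purifying system. -/
theorem stmt18 {d : ℕ} (ρ : Matrix (Fin d) (Fin d) ℂ) (hρ : IsDensityMatrix ρ) :
    C0 ρ = sInf {x | ∃ dE : ℕ, 1 ≤ dE ∧ ∃ ψ : Fin d × Fin dE → ℂ, IsPurification ρ ψ ∧
      ∃ e : Fin dE → Fin dE → ℂ,
        (∀ j j', (∑ k, e j k * starRingEnd ℂ (e j' k)) = if j = j' then 1 else 0) ∧
        x = Real.logb 2 ((Finset.univ.sup fun j : Fin dE =>
          (Finset.univ.filter fun i : Fin d =>
            (∑ k, ψ (i, k) * starRingEnd ℂ (e j k)) ≠ 0).card : ℕ) : ℝ)} :=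
  stmt18_general ρ
end

section
/- The relative entropy of coherence equals the conditional von Neumann entropy of the dephased purification: let ρ be a d_A×d_A density matrix, let ψ be a purification of ρ on ℂ^{d_A}⊗ℂ^{d_E}, let ρ_{X_A E} be the matrix on index set (Fin d_A × Fin d_E) with entries ρ_{X_A E}((i,k),(j,l)) = ψ(i,k)·conj(ψ(j,l)) if i = j and 0 otherwise, and let ρ_E be the d_E×d_E matrix with ρ_E(k,l) = Σ_i ψ(i,k)·conj(ψ(i,l)). Then S(Δ(ρ)) − S(ρ) = S(ρ_{X_A E}) − S(ρ_E). -/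
open Matrix Kronecker
open scoped ComplexOrder Classical

/-!
Write `ψ` as the `d_A × d_E` matrix `M`, so that `ρ = M Mᴴ` and `ρ_E = (Mᴴ M)ᵀ`, and as the
`(d_A d_E) × d_A` matrix `N ((i, k), j) = δᵢⱼ ψ(i, k)`, so that `ρ_{X_A E} = N Nᴴ` and
`Nᴴ N = Δ(ρ)`. Since `X ^ |n| · χ_{AB} = X ^ |m| · χ_{BA}`, the products `AB` and `BA` have the
same nonzero eigenvalues, and zero eigenvalues do not contribute to the entropy. Hence
`S(ρ_{X_A E}) = S(Δ(ρ))` and `S(ρ_E) = S(ρ)`.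
-/

open Polynomial

section Entropy

variable {m n : Type*} [Fintype m] [DecidableEq m] [Fintype n] [DecidableEq n]

lemma trLog2Self_eq_sum_roots_charpoly {A : Matrix n n ℂ} (hA : A.IsHermitian) :
    trLog2Self A = (A.charpoly.roots.map fun z => z.re * Real.logb 2 z.re).sum := by
  rw [trLog2Self, dif_pos hA, hA.roots_charpoly_eq_eigenvalues, Multiset.map_map,
    Finset.sum_eq_multiset_sum]
  simp [Function.comp_def]

lemma vN_eq_of_X_pow_mul_charpoly_eq {A : Matrix m m ℂ} {B : Matrix n n ℂ}
    (hA : A.IsHermitian) (hB : B.IsHermitian) {a b : ℕ}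
    (h : X ^ a * A.charpoly = X ^ b * B.charpoly) : vN A = vN B := by
  have hroots := congrArg roots h
  rw [roots_mul ((monic_X_pow a).mul A.charpoly_monic).ne_zero,
    roots_mul ((monic_X_pow b).mul B.charpoly_monic).ne_zero, roots_X_pow, roots_X_pow] at hroots
  have hsum := congrArg (fun s => (s.map fun z : ℂ => z.re * Real.logb 2 z.re).sum) hroots
  simp only [Multiset.map_add, Multiset.sum_add, Multiset.map_nsmul, Multiset.sum_nsmul,
    Multiset.map_singleton, Multiset.sum_singleton, Complex.zero_re, zero_mul, smul_zero,
    zero_add] at hsum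
  rw [vN, vN, trLog2Self_eq_sum_roots_charpoly hA, trLog2Self_eq_sum_roots_charpoly hB, hsum]

lemma vN_mul_conjTranspose_self (A : Matrix m n ℂ) : vN (A * Aᴴ) = vN (Aᴴ * A) :=
  vN_eq_of_X_pow_mul_charpoly_eq (isHermitian_mul_conjTranspose_self A)
    (isHermitian_conjTranspose_mul_self A) (charpoly_mul_comm' A Aᴴ)

lemma vN_transpose {A : Matrix n n ℂ} (hA : A.IsHermitian) : vN Aᵀ = vN A :=
  vN_eq_of_X_pow_mul_charpoly_eq (a := 0) (b := 0) hA.transpose hA (by simp)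

end Entropy

section Purification

variable {dA dE : ℕ}

def dephasedPurFactor (ψ : Fin dA × Fin dE → ℂ) : Matrix (Fin dA × Fin dE) (Fin dA) ℂ :=
  Matrix.of fun x j => if x.1 = j then ψ x else 0

lemma dephasedPur_eq_mul_conjTranspose (ψ : Fin dA × Fin dE → ℂ) :
    dephasedPur ψ = dephasedPurFactor ψ * (dephasedPurFactor ψ)ᴴ := by
  ext ⟨i, k⟩ ⟨j, l⟩
  simp only [dephasedPur, dephasedPurFactor, mul_apply, conjTranspose_apply, of_apply]
  split_ifs with hij
  · subst hij
    simp
  · rw [Finset.sum_eq_zero]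
    intro j' _
    split_ifs <;> simp_all

lemma conjTranspose_mul_dephasedPurFactor {ρ : Matrix (Fin dA) (Fin dA) ℂ}
    {ψ : Fin dA × Fin dE → ℂ} (hψ : IsPurification ρ ψ) :
    (dephasedPurFactor ψ)ᴴ * dephasedPurFactor ψ = diagonal fun i => ρ i i := by
  ext i j
  simp only [dephasedPurFactor, mul_apply, conjTranspose_apply, of_apply, diagonal_apply,
    Fintype.sum_prod_type]
  split_ifs with hij
  · subst hij
    simp [← hψ.2 i i, mul_comm]
  · simp [Finset.sum_ite_eq', Ne.symm hij]

end Purification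

theorem stmt19_general {dA dE : ℕ} (ρ : Matrix (Fin dA) (Fin dA) ℂ)
    (ψ : Fin dA × Fin dE → ℂ) (hψ : IsPurification ρ ψ)
    (ρE : Matrix (Fin dE) (Fin dE) ℂ)
    (hρE : ∀ k l, ρE k l = ∑ i, ψ (i, k) * starRingEnd ℂ (ψ (i, l))) :
    vN (Matrix.diagonal fun i => ρ i i) - vN ρ = vN (dephasedPur ψ) - vN ρE := by
  set M : Matrix (Fin dA) (Fin dE) ℂ := Matrix.of fun i k => ψ (i, k)
  have hρM : ρ = M * Mᴴ := by
    ext i j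
    simp [M, ← hψ.2 i j, mul_apply]
  have hρEM : ρE = (Mᴴ * M)ᵀ := by
    ext k l
    simp [M, hρE, mul_apply, mul_comm]
  have hXE : vN (dephasedPur ψ) = vN (diagonal fun i => ρ i i) := by
    rw [dephasedPur_eq_mul_conjTranspose, vN_mul_conjTranspose_self,
      conjTranspose_mul_dephasedPurFactor hψ]
  have hE : vN ρE = vN ρ := by
    rw [hρEM, vN_transpose (isHermitian_conjTranspose_mul_self M), ← vN_mul_conjTranspose_self,
      ← hρM]
  rw [hXE, hE]

/-- `S(Δ(ρ)) - S(ρ) = S(ρ_{X_A E}) - S(ρ_E)`, i.e. the relative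
entropy of coherence equals the conditional von Neumann entropy of the dephased
purification. -/
theorem stmt19 {dA dE : ℕ} (ρ : Matrix (Fin dA) (Fin dA) ℂ) (hρ : IsDensityMatrix ρ)
    (ψ : Fin dA × Fin dE → ℂ) (hψ : IsPurification ρ ψ)
    (ρE : Matrix (Fin dE) (Fin dE) ℂ)
    (hρE : ∀ k l, ρE k l = ∑ i, ψ (i, k) * starRingEnd ℂ (ψ (i, l))) :
    vN (Matrix.diagonal fun i => ρ i i) - vN ρ = vN (dephasedPur ψ) - vN ρE :=
  stmt19_general ρ ψ hψ ρE hρE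
end
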